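/- (PE-1 implies PE-2, finite-dimensional form.) Let (M, d) be a metric space, K : M × M → ℝ a continuous strictly positive definite kernel, x_1, …, x_n ∈ M pairwise distinct, and let x : [0, ∞) → M be a continuous trajectory whose image has compact closure. If the finite-dimensional PE-1 condition holds with constants T₁, γ₁, δ₁, Δ₁ > 0, then the finite-dimensional PE-2 condition holds with constants T₂ = T₁, Δ₂ = Δ₁ + δ₁ and γ₂ = γ₁² / δ₁; that is, ∫_t^{t+Δ₁+δ₁} (g_α(x(τ)))² dτ ≥ (γ₁²/δ₁) αᵀ G α for all t ≥ T₁ and all α ∈ ℝ^n. -/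

import Mathlib

open MeasureTheory Matrix Set

/-- The kernel combination `g_α(y) = Σ_i α_i K(x_i, y)`. -/
def gcomb {M : Type*} {n : ℕ} (K : M → M → ℝ) (xc : Fin n → M) (α : Fin n → ℝ) (y : M) : ℝ :=
  ∑ i, α i * K (xc i) y

/-- The Gram matrix `G_{ij} = K(x_i, x_j)` of the kernel centers. -/
def Gram {M : Type*} {n : ℕ} (K : M → M → ℝ) (xc : Fin n → M) : Matrix (Fin n) (Fin n) ℝ :=
  Matrix.of fun i j => K (xc i) (xc j)

/-- A kernel is strictly positive definite: symmetric, and the Gram matrix of any finite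
collection of pairwise distinct points is positive definite. -/
def StrictlyPD {M : Type*} (K : M → M → ℝ) : Prop :=
  (∀ y z, K y z = K z y) ∧
  ∀ (m : ℕ) (y : Fin m → M), Function.Injective y →
    (Matrix.of fun i j => K (y i) (y j)).PosDef

/-- The finite-dimensional PE-1 condition with constants `T₁, γ₁, δ₁, Δ₁`. -/
def PE1 {M : Type*} {n : ℕ} (K : M → M → ℝ) (xc : Fin n → M) (x : ℝ → M)
    (T₁ γ₁ δ₁ Δ₁ : ℝ) : Prop :=
  ∀ t ≥ T₁, ∀ α : Fin n → ℝ, ∃ s ∈ Set.Icc t (t + Δ₁),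
    γ₁ * Real.sqrt (α ⬝ᵥ (Gram K xc) *ᵥ α) ≤
      |∫ τ in Set.Icc s (s + δ₁), gcomb K xc α (x τ)|

/-- The finite-dimensional PE-2 condition with constants `T₂, γ₂, Δ₂`. -/
def PE2 {M : Type*} {n : ℕ} (K : M → M → ℝ) (xc : Fin n → M) (x : ℝ → M)
    (T₂ γ₂ Δ₂ : ℝ) : Prop :=
  ∀ t ≥ T₂, ∀ α : Fin n → ℝ,
    γ₂ * (α ⬝ᵥ (Gram K xc) *ᵥ α) ≤ ∫ τ in Set.Icc t (t + Δ₂), (gcomb K xc α (x τ)) ^ 2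

/-! Cauchy–Schwarz on the PE-1 window `[s, s + δ₁] ⊆ [t, t + Δ₁ + δ₁]` gives
`γ₁² αᵀGα ≤ (∫_s^{s+δ₁} g_α)² ≤ δ₁ ∫_s^{s+δ₁} g_α² ≤ δ₁ ∫_t^{t+Δ₁+δ₁} g_α²`. -/

theorem sq_integral_le_measureReal_mul_integral_sq {α : Type*} [MeasurableSpace α]
    {μ : Measure α} [IsFiniteMeasure μ] {f : α → ℝ} (hf : Integrable f μ)
    (hf2 : Integrable (fun a => f a ^ 2) μ) :
    (∫ a, f a ∂μ) ^ 2 ≤ μ.real univ * ∫ a, f a ^ 2 ∂μ := by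
  rcases eq_zero_or_neZero μ with rfl | _
  · simp
  have hμ : 0 < μ.real univ := measureReal_univ_pos
  have hJensen : (⨍ a, f a ∂μ) ^ 2 ≤ ⨍ a, f a ^ 2 ∂μ :=
    even_two.convexOn_pow.map_average_le (continuous_pow 2).continuousOn isClosed_univ
      (by simp) hf hf2
  rw [average_eq, average_eq, smul_eq_mul, smul_eq_mul, mul_pow, inv_pow, sq (μ.real univ),
    mul_inv, mul_assoc, mul_le_mul_iff_right₀ (inv_pos.2 hμ), inv_mul_le_iff₀ hμ] at hJensen
  exact hJensen

theorem sq_setIntegral_Icc_le {f : ℝ → ℝ} {a b : ℝ} (hab : a ≤ b)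
    (hf : ContinuousOn f (Icc a b)) :
    (∫ x in Icc a b, f x) ^ 2 ≤ (b - a) * ∫ x in Icc a b, f x ^ 2 := by
  simpa [Real.volume_real_Icc_of_le hab] using
    sq_integral_le_measureReal_mul_integral_sq (μ := volume.restrict (Icc a b))
      hf.integrableOn_Icc (hf.pow 2).integrableOn_Icc

theorem continuous_gcomb {M : Type*} [TopologicalSpace M] {n : ℕ} {K : M → M → ℝ}
    (hK : ∀ y, Continuous (K y)) (xc : Fin n → M) (α : Fin n → ℝ) :
    Continuous (gcomb K xc α) :=
  continuous_finsetSum _ fun i _ => continuous_const.mul (hK (xc i))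

theorem stmt5_general {M : Type*} [MetricSpace M] {n : ℕ}
    (K : M → M → ℝ) (hKcont : Continuous fun p : M × M => K p.1 p.2)
    (xc : Fin n → M)
    (x : ℝ → M) (hx : ContinuousOn x (Set.Ici 0))
    (T₁ γ₁ δ₁ Δ₁ : ℝ) (hT₁ : 0 < T₁) (hγ₁ : 0 < γ₁) (hδ₁ : 0 < δ₁)
    (hPE1 : PE1 K xc x T₁ γ₁ δ₁ Δ₁) :
    PE2 K xc x T₁ (γ₁ ^ 2 / δ₁) (Δ₁ + δ₁) := by
  intro t ht α
  set q := α ⬝ᵥ Gram K xc *ᵥ α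
  set g : ℝ → ℝ := fun τ => gcomb K xc α (x τ)
  obtain ⟨s, hs, hγq⟩ := hPE1 t ht α
  have hsub : Icc s (s + δ₁) ⊆ Icc t (t + (Δ₁ + δ₁)) := Icc_subset_Icc hs.1 (by linarith [hs.2])
  have hg : ContinuousOn g (Icc t (t + (Δ₁ + δ₁))) :=
    (continuous_gcomb (fun y => hKcont.comp (.prodMk_right y)) xc α).comp_continuousOn
      (hx.mono fun τ hτ => le_trans (by linarith) hτ.1)
  have hCS := sq_setIntegral_Icc_le (by linarith) (hg.mono hsub)
  rw [add_sub_cancel_left] at hCS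
  calc γ₁ ^ 2 / δ₁ * q ≤ (γ₁ * √q) ^ 2 / δ₁ := by
        rw [mul_pow, Real.sq_sqrt', div_mul_eq_mul_div]
        gcongr
        exact le_max_left _ _
    _ ≤ (∫ τ in Icc s (s + δ₁), g τ) ^ 2 / δ₁ := by
        rw [← sq_abs (∫ τ in Icc s (s + δ₁), g τ)]
        gcongr
    _ ≤ ∫ τ in Icc s (s + δ₁), g τ ^ 2 := (div_le_iff₀' hδ₁).2 hCS
    _ ≤ ∫ τ in Icc t (t + (Δ₁ + δ₁)), g τ ^ 2 :=
        setIntegral_mono_set (hg.pow 2).integrableOn_Icc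
          (.of_forall fun τ => sq_nonneg (g τ)) hsub.eventuallyLE

theorem stmt5 {M : Type*} [MetricSpace M] {n : ℕ}
    (K : M → M → ℝ) (hKcont : Continuous fun p : M × M => K p.1 p.2)
    (hKspd : StrictlyPD K)
    (xc : Fin n → M) (hxc : Function.Injective xc)
    (x : ℝ → M) (hx : ContinuousOn x (Set.Ici 0))
    (hcomp : IsCompact (closure (x '' Set.Ici 0)))
    (T₁ γ₁ δ₁ Δ₁ : ℝ) (hT₁ : 0 < T₁) (hγ₁ : 0 < γ₁) (hδ₁ : 0 < δ₁) (hΔ₁ : 0 < Δ₁)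
    (hPE1 : PE1 K xc x T₁ γ₁ δ₁ Δ₁) :
    PE2 K xc x T₁ (γ₁ ^ 2 / δ₁) (Δ₁ + δ₁) :=
  stmt5_general K hKcont xc x hx T₁ γ₁ δ₁ Δ₁ hT₁ hγ₁ hδ₁ hPE1
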